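/- Let t and a be odd integers, c ≥ 0 an integer, and let b be the smallest positive integer such that t ≢ ±1 (mod 2^b). Define s(n) = a·((t^2)^(n+c) - 1)/2^b. Then the discriminator of s satisfies D_s(n) = 2^⌈log₂ n⌉ for all n ≥ 1. -/

import Mathlib

/-!
Put `x = t²`, so that `2^b (s j - s i) = a x^(i+c) (x^(j-i) - 1)` for `i ≤ j`. The minimality of `b`
says exactly that `v₂(x - 1) = b`, and lifting the exponent gives `v₂(x^d - 1) = b + v₂(d)`. Hence
`s j - s i` has 2-adic valuation `v₂(j - i) < ⌈log₂ n⌉`, so `2^⌈log₂ n⌉` separates the first `n` terms.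

Conversely, let `m = 2^f q < 2^⌈log₂ n⌉` with `q` odd. The powers of `x` are squares, and modulo `q`
there are at most `q/2 + 1` squares since `y` and `-y` have the same square; so `x^i ≡ x^j (mod q)`
for some `i < j ≤ (q + 1)/2`. Then also `x^i ≡ x^(i + 2^f (j - i)) (mod q)`, and the extra factor
`2^f` of the exponent gap supplies the power of two, so `m` divides `s (i + 2^f (j - i)) - s i`
while `i + 2^f (j - i) ≤ 2^f (q + 1)/2 ≤ 2^(⌈log₂ n⌉ - 1) < n`.
-/

theorem Int.two_pow_succ_dvd_sq_sub_one_iff {t : ℤ} (ht : Odd t) {k : ℕ} (hk : 0 < k) :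
    2 ^ (k + 1) ∣ t ^ 2 - 1 ↔ t ≡ 1 [ZMOD 2 ^ k] ∨ t ≡ -1 [ZMOD 2 ^ k] := by
  obtain ⟨u, rfl⟩ := ht
  obtain ⟨k, rfl⟩ : ∃ k', k = k' + 1 := ⟨k - 1, by omega⟩
  have hsq : 2 ^ (k + 1 + 1) ∣ (2 * u + 1) ^ 2 - 1 ↔ 2 ^ k ∣ u * (u + 1) := by
    rw [show (2 * u + 1) ^ 2 - 1 = u * (u + 1) * 4 by ring,
      show (2 : ℤ) ^ (k + 1 + 1) = 2 ^ k * 4 by ring, mul_dvd_mul_iff_right (by norm_num)]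
  have hone : 2 * u + 1 ≡ 1 [ZMOD 2 ^ (k + 1)] ↔ 2 ^ k ∣ u := by
    rw [Int.modEq_comm, Int.modEq_iff_dvd, show 2 * u + 1 - 1 = u * 2 by ring, pow_succ,
      mul_dvd_mul_iff_right two_ne_zero]
  have hneg : 2 * u + 1 ≡ -1 [ZMOD 2 ^ (k + 1)] ↔ 2 ^ k ∣ u + 1 := by
    rw [Int.modEq_comm, Int.modEq_iff_dvd, show 2 * u + 1 - -1 = (u + 1) * 2 by ring, pow_succ,
      mul_dvd_mul_iff_right two_ne_zero]
  rw [hsq, hone, hneg]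
  refine ⟨fun h => ?_, ?_⟩
  · rcases Int.even_or_odd u with hu | hu
    · exact Or.inl (((Int.isCoprime_two_left.2 hu.add_one).pow_left).dvd_of_dvd_mul_right h)
    · exact Or.inr (((Int.isCoprime_two_left.2 hu).pow_left).dvd_of_dvd_mul_left h)
  · rintro (h | h)
    · exact h.mul_right _
    · exact h.mul_left _

theorem Int.four_dvd_sq_sub_one {t : ℤ} (ht : Odd t) : 4 ∣ t ^ 2 - 1 :=
  (Int.two_pow_succ_dvd_sq_sub_one_iff ht one_pos).2 (Or.inl (Int.odd_iff.1 ht))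

theorem Int.emultiplicity_two_sq_sub_one {t : ℤ} (ht : Odd t) {b : ℕ}
    (hb : IsLeast {b : ℕ | 0 < b ∧ ¬(t ≡ 1 [ZMOD 2 ^ b] ∨ t ≡ -1 [ZMOD 2 ^ b])} b) :
    emultiplicity 2 (t ^ 2 - 1) = b := by
  obtain ⟨⟨hb0, hbt⟩, hmin⟩ := hb
  rw [← Int.two_pow_succ_dvd_sq_sub_one_iff ht hb0] at hbt
  have hb1 : 2 ≤ b := by
    by_contra! h
    obtain rfl : b = 1 := by omega
    exact hbt (Int.four_dvd_sq_sub_one ht)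
  have hdvd : 2 ^ b ∣ t ^ 2 - 1 := by
    by_contra h
    have := hmin (a := b - 1) ⟨by omega, by
      rwa [← Int.two_pow_succ_dvd_sq_sub_one_iff ht (by omega), Nat.sub_add_cancel (by omega)]⟩
    omega
  exact emultiplicity_eq_coe.2 ⟨hdvd, hbt⟩

theorem Int.two_pow_add_dvd_pow_sub_one_iff {x : ℤ} {b : ℕ} (hx : 4 ∣ x - 1)
    (hxb : emultiplicity 2 (x - 1) = b) (k d : ℕ) :
    2 ^ (b + k) ∣ x ^ d - 1 ↔ 2 ^ k ∣ d := by
  have hxodd : ¬ 2 ∣ x := by omega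
  have hlte := Int.two_pow_sub_pow' d (y := 1) hx hxodd
  rw [one_pow] at hlte
  rw [pow_dvd_iff_le_emultiplicity, hlte, hxb, Nat.cast_add,
    ENat.add_le_add_iff_left (ENat.natCast_ne_top b), ← pow_dvd_iff_le_emultiplicity]
  norm_cast

theorem Int.mul_pow_sub_one_ediv_sub {x m : ℤ} (hm : m ∣ x - 1) {i j : ℕ} (hij : i ≤ j) :
    m * ((x ^ j - 1) / m - (x ^ i - 1) / m) = x ^ i * (x ^ (j - i) - 1) := by
  obtain ⟨d, rfl⟩ := Nat.exists_eq_add_of_le hij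
  rw [mul_sub, Int.mul_ediv_cancel' (hm.trans (sub_one_dvd_pow_sub_one x _)),
    Int.mul_ediv_cancel' (hm.trans (sub_one_dvd_pow_sub_one x _)), Nat.add_sub_cancel_left]
  ring

theorem ZMod.exists_le_half_natCast_sq_eq {q : ℕ} [NeZero q] (y : ZMod q) :
    ∃ k ≤ q / 2, (k : ZMod q) ^ 2 = y ^ 2 := by
  by_cases hy : y.val ≤ q / 2
  · exact ⟨y.val, hy, by rw [ZMod.natCast_zmod_val]⟩
  · refine ⟨q - y.val, by have := y.val_lt; omega, ?_⟩
    rw [Nat.cast_sub y.val_lt.le, ZMod.natCast_self, ZMod.natCast_zmod_val]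
    ring

theorem Int.exists_sq_pow_modEq_sq_pow (x : ℤ) {q : ℕ} (hq : q ≠ 0) :
    ∃ i j, i < j ∧ j ≤ q / 2 + 1 ∧ (x ^ 2) ^ i ≡ (x ^ 2) ^ j [ZMOD q] := by
  have : NeZero q := ⟨hq⟩
  have hmaps : Set.MapsTo (fun k : ℕ => ((x : ZMod q) ^ k) ^ 2) (Finset.range (q / 2 + 2))
      ((Finset.range (q / 2 + 1)).image fun k : ℕ => (k : ZMod q) ^ 2) := by
    intro k _
    obtain ⟨l, hl, hsq⟩ := ZMod.exists_le_half_natCast_sq_eq ((x : ZMod q) ^ k)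
    exact Finset.mem_image.2 ⟨l, Finset.mem_range.2 (by omega), hsq⟩
  obtain ⟨i, hi, j, hj, hne, heq⟩ :=
    Finset.exists_ne_map_eq_of_card_lt_of_maps_to (Finset.card_image_le.trans_lt (by simp)) hmaps
  have hmodEq : ∀ {i j : ℕ}, ((x : ZMod q) ^ i) ^ 2 = ((x : ZMod q) ^ j) ^ 2 →
      (x ^ 2) ^ i ≡ (x ^ 2) ^ j [ZMOD q] := fun h => by
    rw [← ZMod.intCast_eq_intCast_iff]
    push_cast
    rwa [pow_right_comm, pow_right_comm _ 2]
  simp only [Finset.mem_range] at hi hj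
  rcases hne.lt_or_gt with h | h
  · exact ⟨i, j, h, by omega, hmodEq heq⟩
  · exact ⟨j, i, h, by omega, (hmodEq heq).symm⟩

theorem Int.ModEq.pow_add_mul {x q : ℤ} {i d : ℕ} (h : x ^ i ≡ x ^ (i + d) [ZMOD q]) (k : ℕ) :
    x ^ i ≡ x ^ (i + k * d) [ZMOD q] := by
  induction k with
  | zero => simp
  | succ k ih =>
    calc x ^ i ≡ x ^ (i + d) [ZMOD q] := h
      _ = x ^ i * x ^ d := pow_add ..
      _ ≡ x ^ (i + k * d) * x ^ d [ZMOD q] := ih.mul_right _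
      _ = x ^ (i + (k + 1) * d) := by ring

theorem Nat.two_pow_clog_lt_two_mul {n : ℕ} (hn : 0 < n) : 2 ^ clog 2 n < 2 * n := by
  rcases (show n = 1 ∨ 1 < n by omega) with rfl | hn1
  · simp [clog_one_right]
  · have hpred := pow_pred_clog_lt_self one_lt_two hn1
    calc 2 ^ clog 2 n = 2 * 2 ^ (clog 2 n).pred := by
          rw [← pow_succ', Nat.succ_pred_eq_of_pos (clog_pos one_lt_two hn1)]
      _ < 2 * n := by omega

theorem Int.exists_two_pow_mul_dvd_sq_pow_mul_sq_pow_sub_one {t : ℤ} {b m e : ℕ}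
    (ht : 4 ∣ t ^ 2 - 1) (htb : emultiplicity 2 (t ^ 2 - 1) = b) (hm : 0 < m) (hme : m < 2 ^ e) :
    ∃ i j, i < j ∧ 2 * j ≤ 2 ^ e ∧
      (2 ^ b * m : ℤ) ∣ (t ^ 2) ^ i * ((t ^ 2) ^ (j - i) - 1) := by
  obtain ⟨f, q, hq, rfl⟩ := Nat.exists_eq_two_pow_mul_odd hm.ne'
  obtain ⟨i, j, hij, hjq, hmod⟩ := Int.exists_sq_pow_modEq_sq_pow t hq.pos.ne'
  obtain ⟨d, rfl⟩ := Nat.exists_eq_add_of_lt hij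
  have hqe : 2 ^ f * (q + 1) ≤ 2 ^ e := by
    have hfe : f ≤ e := ((Nat.pow_lt_pow_iff_right one_lt_two).1
      ((Nat.le_mul_of_pos_right _ hq.pos).trans_lt hme)).le
    rw [← pow_mul_pow_sub 2 hfe] at hme ⊢
    exact Nat.mul_le_mul_left _ (Nat.lt_of_mul_lt_mul_left hme)
  have hf := Nat.one_le_two_pow (n := f)
  refine ⟨i, i + 2 ^ f * (d + 1), by nlinarith, ?_, ?_⟩
  · have hdq : 2 * (i + d + 1) ≤ q + 1 := by obtain ⟨k, rfl⟩ := hq; omega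
    calc 2 * (i + 2 ^ f * (d + 1)) ≤ 2 ^ f * (2 * (i + d + 1)) := by nlinarith
      _ ≤ 2 ^ f * (q + 1) := Nat.mul_le_mul_left _ hdq
      _ ≤ 2 ^ e := hqe
  · rw [Nat.add_sub_cancel_left, Nat.cast_mul, ← mul_assoc, Nat.cast_pow, Nat.cast_ofNat,
      ← pow_add]
    refine ((Int.isCoprime_two_left.2 hq.natCast).pow_left).mul_dvd
      (((Int.two_pow_add_dvd_pow_sub_one_iff ht htb f _).2 (dvd_mul_right _ _)).mul_left _) ?_
    have := ((add_assoc i d 1 ▸ hmod).pow_add_mul (2 ^ f)).dvd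
    rwa [pow_add, ← mul_sub_one] at this

theorem main_discriminator (t a : ℤ) (ht : Odd t) (ha : Odd a) (b : ℕ)
    (hb : IsLeast {b : ℕ | 0 < b ∧
      ¬(t ≡ 1 [ZMOD (2 ^ b : ℤ)] ∨ t ≡ -1 [ZMOD (2 ^ b : ℤ)])} b)
    (c : ℕ) (s : ℕ → ℤ)
    (hsdef : ∀ n, s n = a * (((t ^ 2) ^ (n + c) - 1) / 2 ^ b)) :
    ∀ n : ℕ, 1 ≤ n →
      IsLeast {m : ℕ | 0 < m ∧ ∀ i j : ℕ, i < n → j < n → i ≠ j →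
        ¬(s i ≡ s j [ZMOD (m : ℤ)])} (2 ^ Nat.clog 2 n) := by
  intro n hn
  have h4 := Int.four_dvd_sq_sub_one ht
  have htb := Int.emultiplicity_two_sq_sub_one ht hb
  have h2b : (2 : ℤ) ^ b ∣ t ^ 2 - 1 := pow_dvd_of_le_emultiplicity htb.ge
  have hdiff : ∀ i j, i ≤ j → ∀ m : ℤ,
      m ∣ s j - s i ↔ 2 ^ b * m ∣ a * (t ^ 2) ^ (i + c) * ((t ^ 2) ^ (j - i) - 1) := by
    intro i j hij m
    rw [← mul_dvd_mul_iff_left (pow_ne_zero b two_ne_zero : (2 : ℤ) ^ b ≠ 0), hsdef, hsdef,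
      ← mul_sub, mul_left_comm, Int.mul_pow_sub_one_ediv_sub h2b (by omega : i + c ≤ j + c),
      Nat.add_sub_add_right, mul_assoc]
  refine ⟨⟨by positivity, fun i j hi hj hne hmod => ?_⟩, fun m ⟨hm, hsep⟩ => ?_⟩
  · wlog hij : i < j generalizing i j
    · exact this j i hj hi hne.symm hmod.symm (by omega)
    have h := (hdiff i j hij.le _).1 hmod.dvd
    rw [Nat.cast_pow, Nat.cast_ofNat, ← pow_add] at h
    have hodd : IsCoprime ((2 : ℤ) ^ (b + Nat.clog 2 n)) (a * (t ^ 2) ^ (i + c)) :=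
      (Int.isCoprime_two_left.2 (ha.mul ht.pow.pow)).pow_left
    have hgap := Nat.le_of_dvd (by omega)
      ((Int.two_pow_add_dvd_pow_sub_one_iff h4 htb _ _).1 (hodd.dvd_of_dvd_mul_left h))
    have hn_le := Nat.le_pow_clog one_lt_two n
    omega
  · by_contra! hlt
    obtain ⟨i, j, hij, hj, hdvd⟩ :=
      Int.exists_two_pow_mul_dvd_sq_pow_mul_sq_pow_sub_one h4 htb hm hlt
    have hlt_two_mul := Nat.two_pow_clog_lt_two_mul hn
    refine hsep i j (by omega) (by omega) hij.ne (Int.modEq_iff_dvd.2 ?_)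
    exact (hdiff i j hij.le _).2 ((hdvd.mul_left (a * (t ^ 2) ^ c)).trans (dvd_of_eq (by ring)))
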